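/- arXiv:2310.16200 — 3 statements merged into one kernel-verified Lean document; each statement's English description precedes it below -/
import Mathlib

section
/- For every p ∈ (0,1), the plug-in estimator q̃Zₙ(p) = qZ(p; Q̃ₙ) converges almost surely to qZ(p; Q) as n → ∞. -/
open MeasureTheory Filter Set

/-- The (generalized inverse) quantile function of `F`: `Q(p) = inf {t : F t ≥ p}`. -/
noncomputable def quantile (F : ℝ → ℝ) (p : ℝ) : ℝ := sInf {t : ℝ | p ≤ F t}

/-- The quantile Zenga curve `qZ(p; Q) = 1 - Q(p/2)/Q((1+p)/2)`. -/
noncomputable def qZcurve (Q : ℝ → ℝ) (p : ℝ) : ℝ := 1 - Q (p / 2) / Q ((1 + p) / 2)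

/-- The empirical distribution function of the sample `X 0, …, X (n-1)`. -/
noncomputable def empCDF {Ω : Type*} (X : ℕ → Ω → ℝ) (n : ℕ) (ω : Ω) (t : ℝ) : ℝ :=
  (n : ℝ)⁻¹ * ∑ i ∈ Finset.range n, (if X i ω ≤ t then (1 : ℝ) else 0)

lemma empCDF_mono {Ω : Type*} (X : ℕ → Ω → ℝ) (n : ℕ) (ω : Ω) :
    Monotone (empCDF X n ω) := by
  intro a b hab
  unfold empCDF
  apply mul_le_mul_of_nonneg_left _ (by positivity)
  apply Finset.sum_le_sum
  intro i _
  split_ifs with h1 h2 <;> norm_num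
  exact h2 (h1.trans hab)

/-- Deterministic sandwich lemma for generalized inverses. -/
lemma quantile_mem_Icc {G E : ℝ → ℝ} (hE : Monotone E) {δ q t₁ t₂ : ℝ}
    (hc : ∀ t, |G t - E t| ≤ δ) (h1 : E t₁ + δ < q) (h2 : q + δ ≤ E t₂) :
    quantile G q ∈ Set.Icc t₁ t₂ := by
  have hlb : ∀ s ∈ {t : ℝ | q ≤ G t}, t₁ ≤ s := by
    intro s hs
    by_contra h
    push_neg at h
    have h3 : G s - E s ≤ δ := (abs_le.1 (hc s)).2
    have h4 : E s ≤ E t₁ := hE h.le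
    have : q ≤ G s := hs
    linarith
  have hmem : t₂ ∈ {t : ℝ | q ≤ G t} := by
    have h3 : -δ ≤ G t₂ - E t₂ := (abs_le.1 (hc t₂)).1
    simp only [Set.mem_setOf_eq]
    linarith
  exact ⟨le_csInf ⟨t₂, hmem⟩ hlb, csInf_le ⟨t₁, hlb⟩ hmem⟩

/-- The quantile of a continuous CDF is a genuine root: `F (Q q) = q`, and `Q q > 0`. -/
lemma quantile_fixed {F : ℝ → ℝ} (hFcont : Continuous F) (hF0 : ∀ t ≤ 0, F t = 0)
    {q : ℝ} (hq : 0 < q) (hT : ∃ T, q ≤ F T) :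
    0 < quantile F q ∧ F (quantile F q) = q := by
  set S := {t : ℝ | q ≤ F t} with hS
  have hSc : IsClosed S := isClosed_le continuous_const hFcont
  have hne : S.Nonempty := hT
  have hbd : BddBelow S := by
    refine ⟨0, fun s hs => ?_⟩
    by_contra h
    push_neg at h
    have : F s = 0 := hF0 s h.le
    have : q ≤ F s := hs
    linarith
  have hmemQ : quantile F q ∈ S := hSc.csInf_mem hne hbd
  have hge : q ≤ F (quantile F q) := hmemQ
  have hQpos : 0 < quantile F q := by
    by_contra h
    push_neg at h
    have : F (quantile F q) = 0 := hF0 _ h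
    linarith
  refine ⟨hQpos, ?_⟩
  -- intermediate value theorem on [0, Q]
  have hivt : q ∈ F '' Set.Icc 0 (quantile F q) := by
    apply intermediate_value_Icc hQpos.le hFcont.continuousOn
    constructor
    · rw [hF0 0 le_rfl]; exact hq.le
    · exact hge
  obtain ⟨t, ht, hFt⟩ := hivt
  have htS : t ∈ S := by rw [hS, Set.mem_setOf_eq, hFt]
  have h1 : quantile F q ≤ t := csInf_le hbd htS
  have h2 : t = quantile F q := le_antisymm ht.2 h1
  rw [← h2, hFt]

/-- Strong law of large numbers for the empirical CDF at a fixed point. -/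
lemma empCDF_tendsto_ae {Ω : Type*} [MeasurableSpace Ω] (μ : Measure Ω)
    [IsProbabilityMeasure μ]
    (X : ℕ → Ω → ℝ) (hXmeas : ∀ i, Measurable (X i))
    (hindep : ProbabilityTheory.iIndepFun X μ)
    (F : ℝ → ℝ) (hdist : ∀ i t, (μ {ω | X i ω ≤ t}).toReal = F t) (t : ℝ) :
    ∀ᵐ ω ∂μ, Filter.Tendsto (fun n => empCDF X n ω t) atTop (nhds (F t)) := by
  -- identical distribution of the Xᵢ
  have hmap : ∀ i, Measure.map (X i) μ = Measure.map (X 0) μ := by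
    intro i
    haveI : IsProbabilityMeasure (Measure.map (X i) μ) :=
      Measure.isProbabilityMeasure_map (hXmeas i).aemeasurable
    refine Measure.ext_of_Iic _ _ (fun a => ?_)
    rw [Measure.map_apply (hXmeas i) measurableSet_Iic,
      Measure.map_apply (hXmeas 0) measurableSet_Iic]
    have h1 : X i ⁻¹' Set.Iic a = {ω | X i ω ≤ a} := rfl
    have h2 : X 0 ⁻¹' Set.Iic a = {ω | X 0 ω ≤ a} := rfl
    rw [h1, h2]
    refine (ENNReal.toReal_eq_toReal_iff' (measure_ne_top μ _) (measure_ne_top μ _)).mp ?_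
    rw [hdist i a, hdist 0 a]
  have hXident : ∀ i, ProbabilityTheory.IdentDistrib (X i) (X 0) μ μ :=
    fun i => ⟨(hXmeas i).aemeasurable, (hXmeas 0).aemeasurable, hmap i⟩
  -- the indicator variables
  set f : ℝ → ℝ := fun x => if x ≤ t then (1 : ℝ) else 0 with hf_def
  have hf : Measurable f := by
    apply Measurable.ite _ measurable_const measurable_const
    exact measurableSet_Iic
  set Y : ℕ → Ω → ℝ := fun i => f ∘ X i with hY_def
  have hYindep : Pairwise (Function.onFun (ProbabilityTheory.IndepFun · · μ) Y) := by
    intro i j hij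
    exact (hindep.comp (fun _ => f) (fun _ => hf)).indepFun hij
  have hYident : ∀ i, ProbabilityTheory.IdentDistrib (Y i) (Y 0) μ μ :=
    fun i => (hXident i).comp hf
  have hs : MeasurableSet {ω | X 0 ω ≤ t} := (hXmeas 0) measurableSet_Iic
  have hY0 : Y 0 = ({ω | X 0 ω ≤ t}).indicator (fun _ => (1 : ℝ)) := by
    ext ω
    simp [hY_def, hf_def, Set.indicator_apply]
  have hint : Integrable (Y 0) μ := by
    rw [hY0]
    exact (integrable_const (1 : ℝ)).indicator hs
  have hmean : (∫ ω, Y 0 ω ∂μ) = F t := by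
    rw [hY0, integral_indicator_const (1 : ℝ) hs, smul_eq_mul, mul_one]
    exact hdist 0 t
  have := ProbabilityTheory.strong_law_ae_real Y hint hYindep hYident
  rw [show (∫ ω, Y 0 ω ∂μ) = F t from hmean] at this
  filter_upwards [this] with ω hω
  convert hω using 2 with n
  unfold empCDF
  rw [inv_mul_eq_div]
  congr 1

/-- A.s. convergence of plug-in quantiles at a fixed level, given pointwise
convergence of the empirical CDF near the true quantile. -/
lemma quantile_tendsto {F : ℝ → ℝ} {q Q : ℝ}
    (hq : 0 < q) (hQpos : 0 < Q) (hFQ : F Q = q)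
    (hF0 : ∀ t ≤ 0, F t = 0) (hFstrict : StrictMonoOn F (Set.Ioi (0 : ℝ)))
    {G E : ℕ → ℝ → ℝ} (hEmono : ∀ n, Monotone (E n))
    (hclose : ∀ n, 1 ≤ n → ∀ t, |G n t - E n t| ≤ 1 / n)
    (hconv : ∀ k : ℕ,
      Filter.Tendsto (fun n => E n (Q - 1 / ((k : ℝ) + 1))) atTop (nhds (F (Q - 1 / ((k : ℝ) + 1))))
      ∧ Filter.Tendsto (fun n => E n (Q + 1 / ((k : ℝ) + 1))) atTop
          (nhds (F (Q + 1 / ((k : ℝ) + 1))))) :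
    Filter.Tendsto (fun n => quantile (G n) q) atTop (nhds Q) := by
  rw [Metric.tendsto_atTop]
  intro ε hε
  obtain ⟨k, hk⟩ := exists_nat_one_div_lt hε
  set d : ℝ := 1 / ((k : ℝ) + 1) with hd_def
  have hd : 0 < d := by positivity
  have hlt1 : F (Q - d) < q := by
    rcases le_or_gt (Q - d) 0 with h | h
    · rw [hF0 _ h]; exact hq
    · rw [← hFQ]
      exact hFstrict h (by exact hQpos) (by linarith)
  have hlt2 : q < F (Q + d) := by
    rw [← hFQ]
    exact hFstrict (by exact hQpos) (by simp only [Set.mem_Ioi]; linarith) (by linarith)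
  have h1 := (hconv k).1
  have h2 := (hconv k).2
  have hinv : Filter.Tendsto (fun n : ℕ => 1 / (n : ℝ)) atTop (nhds 0) :=
    tendsto_one_div_atTop_nhds_zero_nat
  have E1 : ∀ᶠ n : ℕ in atTop, E n (Q - d) + 1 / n < q := by
    have := h1.add hinv
    rw [add_zero] at this
    exact this.eventually_lt_const hlt1
  have E2 : ∀ᶠ n : ℕ in atTop, q + 1 / n < E n (Q + d) := by
    have := h2.sub hinv
    rw [sub_zero] at this
    have := this.eventually_const_lt hlt2
    filter_upwards [this] with n hn
    linarith
  have E3 : ∀ᶠ n : ℕ in atTop, 1 ≤ n := eventually_ge_atTop 1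
  obtain ⟨N, hN⟩ := ((E1.and E2).and E3).exists_forall_of_atTop
  refine ⟨N, fun n hn => ?_⟩
  obtain ⟨⟨hn1, hn2⟩, hn3⟩ := hN n hn
  have hmem : quantile (G n) q ∈ Set.Icc (Q - d) (Q + d) :=
    quantile_mem_Icc (hEmono n) (hclose n hn3) hn1 hn2.le
  obtain ⟨hm1, hm2⟩ := hmem
  rw [Real.dist_eq, abs_lt]
  constructor <;> linarith

/-- For every `p ∈ (0,1)`, the plug-in estimator `q̃Zₙ(p) = qZ(p; Q̃ₙ)` converges almost
surely to `qZ(p; Q)` as `n → ∞`. -/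
theorem qZ_plugin_pointwise_as_convergence
    {Ω : Type*} [MeasurableSpace Ω] (μ : Measure Ω) [IsProbabilityMeasure μ]
    (X : ℕ → Ω → ℝ) (hXmeas : ∀ i, Measurable (X i))
    (hindep : ProbabilityTheory.iIndepFun X μ)
    (F : ℝ → ℝ)
    (hdist : ∀ i t, (μ {ω | X i ω ≤ t}).toReal = F t)
    (hFcont : Continuous F)
    (hF0 : ∀ t ≤ 0, F t = 0)
    (hF01 : ∀ t > 0, 0 < F t ∧ F t < 1)
    (hFstrict : StrictMonoOn F (Set.Ioi (0 : ℝ)))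
    (Ftilde : ℕ → Ω → ℝ → ℝ)
    (hFtmeas : ∀ n t, Measurable (fun ω => Ftilde n ω t))
    (hFtclose : ∀ n, 1 ≤ n → ∀ᵐ ω ∂μ, ∀ t, |Ftilde n ω t - empCDF X n ω t| ≤ 1 / n)
    (p : ℝ) (hp : p ∈ Set.Ioo (0 : ℝ) 1) :
    ∀ᵐ ω ∂μ,
      Tendsto (fun n => qZcurve (quantile (Ftilde n ω)) p) atTop
        (nhds (qZcurve (quantile F) p)) := by
  obtain ⟨hp0, hp1⟩ := hp
  -- the CDF tends to 1, so every level q < 1 is attained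
  have hT : ∀ q : ℝ, q < 1 → ∃ T : ℝ, q ≤ F T := by
    intro q hq
    have hmono : Monotone fun n : ℕ => {ω | X 0 ω ≤ (n : ℝ)} := by
      intro a b hab ω hω
      simp only [Set.mem_setOf_eq] at hω ⊢
      exact le_trans hω (Nat.cast_le.2 hab)
    have hunion : ⋃ n : ℕ, {ω | X 0 ω ≤ (n : ℝ)} = Set.univ := by
      ext ω
      simp only [Set.mem_iUnion, Set.mem_setOf_eq, Set.mem_univ, iff_true]
      obtain ⟨n, hn⟩ := exists_nat_ge (X 0 ω)
      exact ⟨n, hn⟩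
    have htend : Filter.Tendsto (fun n : ℕ => μ {ω | X 0 ω ≤ (n : ℝ)}) atTop
        (nhds (μ (⋃ n : ℕ, {ω | X 0 ω ≤ (n : ℝ)}))) :=
      tendsto_measure_iUnion_atTop hmono
    rw [hunion, measure_univ] at htend
    have htoReal : Filter.Tendsto (fun n : ℕ => (μ {ω | X 0 ω ≤ (n : ℝ)}).toReal) atTop
        (nhds (1 : ℝ)) := by
      have := (ENNReal.tendsto_toReal ENNReal.one_ne_top).comp htend
      simpa [Function.comp_def] using this
    simp only [hdist 0] at htoReal
    obtain ⟨n, hn⟩ := (htoReal.eventually_const_lt hq).exists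
    exact ⟨(n : ℝ), hn.le⟩
  -- the two quantile levels
  have hq1 : (0 : ℝ) < p / 2 := by linarith
  have hq1' : p / 2 < 1 := by linarith
  have hq2 : (0 : ℝ) < (1 + p) / 2 := by linarith
  have hq2' : (1 + p) / 2 < 1 := by linarith
  obtain ⟨hQ1pos, hFQ1⟩ := quantile_fixed hFcont hF0 hq1 (hT _ hq1')
  obtain ⟨hQ2pos, hFQ2⟩ := quantile_fixed hFcont hF0 hq2 (hT _ hq2')
  set Q1 := quantile F (p / 2)
  set Q2 := quantile F ((1 + p) / 2)
  -- the good a.e. events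
  have hclose_all : ∀ᵐ ω ∂μ, ∀ n, 1 ≤ n → ∀ t,
      |Ftilde n ω t - empCDF X n ω t| ≤ 1 / n := by
    rw [ae_all_iff]
    intro n
    by_cases h : 1 ≤ n
    · filter_upwards [hFtclose n h] with ω hω _
      exact hω
    · filter_upwards with ω h'
      exact absurd h' h
  have hconv_all : ∀ᵐ ω ∂μ, ∀ k : ℕ,
      (Tendsto (fun n => empCDF X n ω (Q1 - 1 / ((k : ℝ) + 1))) atTop
          (nhds (F (Q1 - 1 / ((k : ℝ) + 1)))) ∧
        Tendsto (fun n => empCDF X n ω (Q1 + 1 / ((k : ℝ) + 1))) atTop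
          (nhds (F (Q1 + 1 / ((k : ℝ) + 1))))) ∧
      (Tendsto (fun n => empCDF X n ω (Q2 - 1 / ((k : ℝ) + 1))) atTop
          (nhds (F (Q2 - 1 / ((k : ℝ) + 1)))) ∧
        Tendsto (fun n => empCDF X n ω (Q2 + 1 / ((k : ℝ) + 1))) atTop
          (nhds (F (Q2 + 1 / ((k : ℝ) + 1))))) := by
    rw [ae_all_iff]
    intro k
    have a1 := empCDF_tendsto_ae μ X hXmeas hindep F hdist (Q1 - 1 / ((k : ℝ) + 1))
    have a2 := empCDF_tendsto_ae μ X hXmeas hindep F hdist (Q1 + 1 / ((k : ℝ) + 1))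
    have a3 := empCDF_tendsto_ae μ X hXmeas hindep F hdist (Q2 - 1 / ((k : ℝ) + 1))
    have a4 := empCDF_tendsto_ae μ X hXmeas hindep F hdist (Q2 + 1 / ((k : ℝ) + 1))
    filter_upwards [a1, a2, a3, a4] with ω h1 h2 h3 h4
    exact ⟨⟨h1, h2⟩, ⟨h3, h4⟩⟩
  filter_upwards [hclose_all, hconv_all] with ω hclose hconv
  have hQ1tend : Tendsto (fun n => quantile (Ftilde n ω) (p / 2)) atTop (nhds Q1) :=
    quantile_tendsto hq1 hQ1pos hFQ1 hF0 hFstrict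
      (fun n => empCDF_mono X n ω) hclose (fun k => (hconv k).1)
  have hQ2tend : Tendsto (fun n => quantile (Ftilde n ω) ((1 + p) / 2)) atTop (nhds Q2) :=
    quantile_tendsto hq2 hQ2pos hFQ2 hF0 hFstrict
      (fun n => empCDF_mono X n ω) hclose (fun k => (hconv k).2)
  have hQ2ne : Q2 ≠ 0 := ne_of_gt hQ2pos
  unfold qZcurve
  exact tendsto_const_nhds.sub (hQ1tend.div hQ2tend hQ2ne)
end

section
/- The quantile Zenga index decreases under a uniform increase in incomes: for every c > 0 and every p ∈ (0,1), qZ(p; Q + c) ≤ qZ(p; Q), and consequently qZI(Q + c) ≤ qZI(Q), where Q + c denotes the function p ↦ Q(p) + c (the quantile function of the shifted variable X + c). -/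
open MeasureTheory Filter Set

/-- The quantile Zenga index `qZI(Q) = ∫₀¹ qZ(p; Q) dp`. -/
noncomputable def qZI (Q : ℝ → ℝ) : ℝ := ∫ p in (0 : ℝ)..1, qZcurve Q p

/-! Adding the same `c ≥ 0` to the numerator and denominator of a ratio `a / b ≤ 1` moves it
towards `1`; applied to `Q(p/2) / Q((1+p)/2)` this lowers the Zenga curve pointwise, and the
index follows by monotonicity of the integral, the curves being bounded and measurable because
`Q` is monotone. -/

theorem div_le_add_div_add {α : Type*} [Field α] [LinearOrder α] [IsStrictOrderedRing α]
    {a b c : α} (hab : a ≤ b) (hb : 0 < b) (hc : 0 ≤ c) : a / b ≤ (a + c) / (b + c) := by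
  rw [div_le_div_iff₀ hb (by positivity)]
  nlinarith [mul_le_mul_of_nonneg_left hab hc]

lemma div_two_mem_Ioo {p : ℝ} (hp : p ∈ Ioo (0 : ℝ) 1) : p / 2 ∈ Ioo (0 : ℝ) 1 :=
  ⟨by linarith [hp.1], by linarith [hp.2]⟩

lemma one_add_div_two_mem_Ioo {p : ℝ} (hp : p ∈ Ioo (0 : ℝ) 1) : (1 + p) / 2 ∈ Ioo (0 : ℝ) 1 :=
  ⟨by linarith [hp.1], by linarith [hp.2]⟩

section ZengaCurve

variable {Q : ℝ → ℝ} (hQpos : ∀ p ∈ Ioo (0 : ℝ) 1, 0 < Q p)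
  (hQmono : MonotoneOn Q (Ioo (0 : ℝ) 1))
include hQpos hQmono

lemma qZcurve_mem_Icc {p : ℝ} (hp : p ∈ Ioo (0 : ℝ) 1) : qZcurve Q p ∈ Icc 0 1 := by
  have hlow : 0 < Q (p / 2) := hQpos _ (div_two_mem_Ioo hp)
  have hle : Q (p / 2) ≤ Q ((1 + p) / 2) :=
    hQmono (div_two_mem_Ioo hp) (one_add_div_two_mem_Ioo hp) (by linarith [hp.1])
  have hhigh : 0 < Q ((1 + p) / 2) := hlow.trans_le hle
  have hratio_pos : 0 < Q (p / 2) / Q ((1 + p) / 2) := div_pos hlow hhigh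
  have hratio_le : Q (p / 2) / Q ((1 + p) / 2) ≤ 1 := (div_le_one hhigh).mpr hle
  unfold qZcurve
  constructor <;> linarith

lemma intervalIntegrable_qZcurve : IntervalIntegrable (qZcurve Q) volume 0 1 := by
  rw [intervalIntegrable_iff_integrableOn_Ioo_of_le zero_le_one]
  have hlow : AEMeasurable (fun p => Q (p / 2)) (volume.restrict (Ioo (0 : ℝ) 1)) :=
    aemeasurable_restrict_of_monotoneOn measurableSet_Ioo fun x hx y hy hxy =>
      hQmono (div_two_mem_Ioo hx) (div_two_mem_Ioo hy) (by linarith)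
  have hhigh : AEMeasurable (fun p => Q ((1 + p) / 2)) (volume.restrict (Ioo (0 : ℝ) 1)) :=
    aemeasurable_restrict_of_monotoneOn measurableSet_Ioo fun x hx y hy hxy =>
      hQmono (one_add_div_two_mem_Ioo hx) (one_add_div_two_mem_Ioo hy) (by linarith)
  refine Integrable.mono' (integrable_const (1 : ℝ))
    (aemeasurable_const.sub (hlow.div hhigh)).aestronglyMeasurable ?_
  filter_upwards [ae_restrict_mem measurableSet_Ioo] with p hp
  have hcurve := qZcurve_mem_Icc hQpos hQmono hp
  rw [Real.norm_eq_abs, abs_le]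
  exact ⟨by linarith [hcurve.1], hcurve.2⟩

lemma qZcurve_add_const_le {c : ℝ} (hc : 0 ≤ c) {p : ℝ} (hp : p ∈ Ioo (0 : ℝ) 1) :
    qZcurve (fun q => Q q + c) p ≤ qZcurve Q p := by
  have hle : Q (p / 2) ≤ Q ((1 + p) / 2) :=
    hQmono (div_two_mem_Ioo hp) (one_add_div_two_mem_Ioo hp) (by linarith [hp.1])
  have hratio := div_le_add_div_add hle (hQpos _ (one_add_div_two_mem_Ioo hp)) hc
  unfold qZcurve
  linarith

end ZengaCurve

/-- The quantile Zenga index decreases under a uniform increase in incomes: for every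
`c > 0`, `qZ(p; Q + c) ≤ qZ(p; Q)` for all `p ∈ (0,1)`, and `qZI(Q + c) ≤ qZI(Q)`. -/
theorem qZ_decreases_under_uniform_increase
(Q : ℝ → ℝ)
    (hQpos : ∀ p ∈ Set.Ioo (0 : ℝ) 1, 0 < Q p)
    (hQmono : MonotoneOn Q (Set.Ioo (0 : ℝ) 1))
    (c : ℝ) (hc : 0 < c) :
    (∀ p ∈ Set.Ioo (0 : ℝ) 1, qZcurve (fun q => Q q + c) p ≤ qZcurve Q p) ∧
      qZI (fun q => Q q + c) ≤ qZI Q := by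
  have hcurve_le : ∀ p ∈ Ioo (0 : ℝ) 1, qZcurve (fun q => Q q + c) p ≤ qZcurve Q p :=
    fun p hp => qZcurve_add_const_le hQpos hQmono hc.le hp
  have hshift_pos : ∀ p ∈ Ioo (0 : ℝ) 1, 0 < Q p + c := fun p hp => by
    linarith [hQpos p hp]
  have hshift_mono : MonotoneOn (fun q => Q q + c) (Ioo (0 : ℝ) 1) :=
    fun x hx y hy hxy => add_le_add_left (hQmono hx hy hxy) c
  exact ⟨hcurve_le, intervalIntegral.integral_mono_on_of_le_Ioo zero_le_one
    (intervalIntegrable_qZcurve hshift_pos hshift_mono)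
    (intervalIntegrable_qZcurve hQpos hQmono) hcurve_le⟩
end

section
/- The function p ↦ qZ(p; Q) is uniformly continuous on (0,1); more precisely, it is continuous on (0,1) and extends to a continuous function on [0,1] with qZ(p; Q) → 1 as p → 0⁺ and qZ(p; Q) → 1 as p → 1⁻. -/
open MeasureTheory Filter Set Topology

section Aux

variable {F : ℝ → ℝ}
variable (hFcont : Continuous F)
    (hF0 : ∀ t ≤ 0, F t = 0)
    (hF01 : ∀ t > 0, 0 < F t ∧ F t < 1)
    (hFstrict : StrictMonoOn F (Set.Ioi (0 : ℝ)))
    (hFtop : Filter.Tendsto F Filter.atTop (nhds 1))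

include hF0 hF01 hFstrict in
lemma F_mono : Monotone F := by
  intro a b hab
  rcases le_or_gt b 0 with hb | hb
  · rw [hF0 a (hab.trans hb), hF0 b hb]
  rcases le_or_gt a 0 with ha | ha
  · rw [hF0 a ha]; exact (hF01 b hb).1.le
  · exact hFstrict.monotoneOn ha hb hab

include hF0 in
lemma S_bddBelow {p : ℝ} (hp : 0 < p) : BddBelow {t : ℝ | p ≤ F t} := by
  refine ⟨0, fun t ht => ?_⟩
  by_contra h
  push_neg at h
  have := hF0 t h.le
  simp only [mem_setOf_eq, this] at ht
  linarith

include hFtop in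
lemma S_nonempty {p : ℝ} (hp : p < 1) : {t : ℝ | p ≤ F t}.Nonempty := by
  obtain ⟨t, ht⟩ := (hFtop.eventually_const_le hp).exists
  exact ⟨t, ht⟩

include hFcont hF0 hFtop in
lemma quantile_mem {p : ℝ} (hp0 : 0 < p) (hp1 : p < 1) :
    p ≤ F (quantile F p) := by
  have hcl : IsClosed {t : ℝ | p ≤ F t} := isClosed_le continuous_const hFcont
  exact hcl.csInf_mem (S_nonempty hFtop hp1) (S_bddBelow hF0 hp0)

include hFcont hF0 hFtop in
lemma quantile_pos {p : ℝ} (hp0 : 0 < p) (hp1 : p < 1) : 0 < quantile F p := by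
  by_contra h
  push_neg at h
  have := quantile_mem hFcont hF0 hFtop hp0 hp1
  rw [hF0 _ h] at this
  linarith

include hFcont hF0 hFtop in
lemma F_quantile {p : ℝ} (hp0 : 0 < p) (hp1 : p < 1) :
    F (quantile F p) = p := by
  refine le_antisymm ?_ (quantile_mem hFcont hF0 hFtop hp0 hp1)
  by_contra h
  push_neg at h
  have hev : ∀ᶠ s in 𝓝 (quantile F p), p < F s :=
    (hFcont.tendsto (quantile F p)).eventually (eventually_gt_nhds h)
  have hev' : ∀ᶠ s in 𝓝[<] (quantile F p), p < F s ∧ s < quantile F p :=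
    (hev.filter_mono nhdsWithin_le_nhds).and eventually_mem_nhdsWithin
  obtain ⟨s, hs1, hs2⟩ := hev'.exists
  exact absurd (csInf_le (S_bddBelow hF0 hp0) hs1.le) (not_le.mpr hs2)

include hFcont hF0 hF01 hFstrict hFtop in
lemma quantile_continuousAt {p : ℝ} (hp : p ∈ Set.Ioo (0:ℝ) 1) :
    ContinuousAt (quantile F) p := by
  obtain ⟨hp0, hp1⟩ := hp
  have hmono := F_mono hF0 hF01 hFstrict
  rw [Metric.continuousAt_iff]
  intro ε hε
  set t := quantile F p with ht
  have htpos : 0 < t := quantile_pos hFcont hF0 hFtop hp0 hp1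
  have hFt : F t = p := F_quantile hFcont hF0 hFtop hp0 hp1
  set e := min (ε/2) (t/2) with he
  have hepos : 0 < e := lt_min (by linarith) (by linarith)
  have hte : 0 < t - e := by
    have : e ≤ t/2 := min_le_right _ _
    linarith
  set a := F (t - e) with ha
  set b := F (t + e) with hb
  have hab : a < p := by
    rw [← hFt]; exact hFstrict hte (by simp [htpos] <;> linarith) (by linarith)
  have hpb : p < b := by
    rw [← hFt]; exact hFstrict (by simpa using htpos) (by simp; linarith) (by linarith)
  have ha0 : 0 < a := (hF01 _ hte).1
  have hb1 : b < 1 := (hF01 _ (by linarith)).2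
  refine ⟨min (p - a) (b - p), lt_min (by linarith) (by linarith), fun {q} hq => ?_⟩
  rw [Real.dist_eq] at hq
  have haq : a < q := by
    have := abs_lt.mp hq
    have := min_le_left (p - a) (b - p)
    linarith [this, (abs_lt.mp hq).1]
  have hqb : q < b := by
    have h1 := (abs_lt.mp hq).2
    have h2 := min_le_right (p - a) (b - p)
    linarith
  have hq0 : 0 < q := ha0.trans haq
  have hub : quantile F q ≤ t + e :=
    csInf_le (S_bddBelow hF0 hq0) hqb.le
  have hlb : t - e ≤ quantile F q := by
    refine le_csInf (S_nonempty hFtop (hqb.trans hb1)) (fun s hs => ?_)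
    by_contra hc
    push_neg at hc
    have : F s ≤ a := hmono hc.le
    have : q ≤ a := le_trans hs this
    linarith
  rw [Real.dist_eq]
  calc |quantile F q - t| ≤ e := abs_le.mpr ⟨by linarith, by linarith⟩
    _ ≤ ε/2 := min_le_left _ _
    _ < ε := by linarith

include hFcont hF0 hF01 hFstrict hFtop in
lemma quantile_tendsto_zero :
    Tendsto (quantile F) (𝓝[>] (0:ℝ)) (𝓝 0) := by
  rw [Metric.tendsto_nhdsWithin_nhds]
  intro ε hε
  have hFe : 0 < F (ε/2) := (hF01 _ (by linarith)).1
  refine ⟨min (F (ε/2)) 1, lt_min hFe one_pos, fun {q} hq hd => ?_⟩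
  rw [Real.dist_eq] at hd ⊢
  have hq0 : 0 < q := hq
  rw [sub_zero] at hd
  rw [abs_of_pos hq0] at hd
  have hq1 : q < 1 := lt_of_lt_of_le hd (min_le_right _ _)
  have hqe : q ≤ F (ε/2) := le_of_lt (lt_of_lt_of_le hd (min_le_left _ _))
  have hub : quantile F q ≤ ε/2 := csInf_le (S_bddBelow hF0 hq0) hqe
  have hpos := quantile_pos hFcont hF0 hFtop hq0 hq1
  rw [sub_zero, abs_of_pos hpos]
  linarith

include hFcont hF0 hF01 hFstrict hFtop in
lemma quantile_tendsto_atTop :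
    Tendsto (quantile F) (𝓝[<] (1:ℝ)) atTop := by
  have hmono := F_mono hF0 hF01 hFstrict
  rw [tendsto_atTop]
  intro M
  set M' := max M 1 with hM'
  have hM'pos : 0 < M' := lt_of_lt_of_le one_pos (le_max_right _ _)
  have hFM' : F M' < 1 := (hF01 _ hM'pos).2
  have h1 : ∀ᶠ q in 𝓝[<] (1:ℝ), F M' < q :=
    eventually_nhdsWithin_of_eventually_nhds (eventually_gt_nhds hFM')
  filter_upwards [h1, self_mem_nhdsWithin] with q hq1 hq2
  have hq0 : 0 < q := lt_trans (hF01 _ hM'pos).1 hq1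
  have : M' ≤ quantile F q := by
    refine le_csInf (S_nonempty hFtop hq2) (fun s hs => ?_)
    by_contra hc
    push_neg at hc
    have : F s ≤ F M' := hmono hc.le
    have : q ≤ F M' := le_trans hs this
    linarith
  exact le_trans (le_max_left M 1) this

end Aux

/-- The map `p ↦ qZ(p; Q)` is uniformly continuous on `(0,1)`: it is continuous on
`(0,1)`, tends to `1` as `p → 0⁺` and as `p → 1⁻`, and extends to a continuous
function on `[0,1]`. -/
theorem qZ_uniformly_continuous
(F : ℝ → ℝ)
    (hFcont : Continuous F)
    (hF0 : ∀ t ≤ 0, F t = 0)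
    (hF01 : ∀ t > 0, 0 < F t ∧ F t < 1)
    (hFstrict : StrictMonoOn F (Set.Ioi (0 : ℝ)))
    (hFtop : Filter.Tendsto F Filter.atTop (nhds 1)) :
    UniformContinuousOn (fun p => qZcurve (quantile F) p) (Set.Ioo (0 : ℝ) 1) ∧
    ContinuousOn (fun p => qZcurve (quantile F) p) (Set.Ioo (0 : ℝ) 1) ∧
    Tendsto (fun p => qZcurve (quantile F) p) (𝓝[>] (0 : ℝ)) (nhds 1) ∧
    Tendsto (fun p => qZcurve (quantile F) p) (𝓝[<] (1 : ℝ)) (nhds 1) ∧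
    ∃ g : ℝ → ℝ, ContinuousOn g (Set.Icc (0 : ℝ) 1) ∧
      Set.EqOn g (fun p => qZcurve (quantile F) p) (Set.Ioo (0 : ℝ) 1) := by
  set Q := quantile F with hQ
  set f : ℝ → ℝ := fun p => qZcurve Q p with hf
  have hQcont : ∀ p ∈ Set.Ioo (0:ℝ) 1, ContinuousAt Q p :=
    fun p hp => quantile_continuousAt hFcont hF0 hF01 hFstrict hFtop hp
  have hQpos : ∀ p ∈ Set.Ioo (0:ℝ) 1, 0 < Q p :=
    fun p hp => quantile_pos hFcont hF0 hFtop hp.1 hp.2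
  have hhalf : (1/2 : ℝ) ∈ Set.Ioo (0:ℝ) 1 := by norm_num
  -- continuity at interior points (full continuity, not just within)
  have hfCA : ∀ p ∈ Set.Ioo (0:ℝ) 1, ContinuousAt f p := by
    intro p hp
    have h1 : p/2 ∈ Set.Ioo (0:ℝ) 1 := ⟨by linarith [hp.1], by linarith [hp.2]⟩
    have h2 : (1+p)/2 ∈ Set.Ioo (0:ℝ) 1 := ⟨by linarith [hp.1], by linarith [hp.2]⟩
    have c1 : ContinuousAt (fun p : ℝ => Q (p/2)) p := by
      have h := ContinuousAt.comp (f := fun q : ℝ => q/2) (x := p) (hQcont _ h1)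
        ((continuous_id.div_const 2).continuousAt)
      exact h
    have c2 : ContinuousAt (fun p : ℝ => Q ((1+p)/2)) p := by
      have h := ContinuousAt.comp (f := fun q : ℝ => (1+q)/2) (x := p) (hQcont _ h2)
        (((continuous_const.add continuous_id).div_const 2).continuousAt)
      exact h
    have hne : Q ((1+p)/2) ≠ 0 := (hQpos _ h2).ne'
    exact continuousAt_const.sub (c1.div c2 hne)
  have hfCont : ContinuousOn f (Set.Ioo (0:ℝ) 1) :=
    fun p hp => (hfCA p hp).continuousWithinAt
  -- limit at 0⁺
  have hmap0 : Tendsto (fun p : ℝ => p/2) (𝓝[>] (0:ℝ)) (𝓝[>] (0:ℝ)) := by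
    apply tendsto_nhdsWithin_of_tendsto_nhds_of_eventually_within
    · have : Tendsto (fun p : ℝ => p/2) (𝓝 (0:ℝ)) (𝓝 ((0:ℝ)/2)) :=
        ((continuous_id.div_const 2).tendsto 0)
      simpa using this.mono_left nhdsWithin_le_nhds
    · filter_upwards [self_mem_nhdsWithin] with p hp
      exact half_pos (Set.mem_Ioi.mp hp)
  have hnum0 : Tendsto (fun p : ℝ => Q (p/2)) (𝓝[>] (0:ℝ)) (𝓝 0) :=
    (quantile_tendsto_zero hFcont hF0 hF01 hFstrict hFtop).comp hmap0
  have hden0 : Tendsto (fun p : ℝ => Q ((1+p)/2)) (𝓝[>] (0:ℝ)) (𝓝 (Q (1/2))) := by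
    have hm : Tendsto (fun p : ℝ => (1+p)/2) (𝓝[>] (0:ℝ)) (𝓝 (1/2 : ℝ)) := by
      have : Tendsto (fun p : ℝ => (1+p)/2) (𝓝 (0:ℝ)) (𝓝 (((1:ℝ)+0)/2)) :=
        (((continuous_const.add continuous_id).div_const 2).tendsto 0)
      norm_num at this
      exact this.mono_left nhdsWithin_le_nhds
    exact (hQcont _ hhalf).tendsto.comp hm
  have hT0 : Tendsto f (𝓝[>] (0:ℝ)) (𝓝 1) := by
    have : Tendsto (fun p : ℝ => Q (p/2) / Q ((1+p)/2)) (𝓝[>] (0:ℝ)) (𝓝 (0 / Q (1/2))) :=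
      hnum0.div hden0 (hQpos _ hhalf).ne'
    rw [zero_div] at this
    have h := (tendsto_const_nhds (x := (1:ℝ)) (f := 𝓝[>] (0:ℝ))).sub this
    simpa [hf, qZcurve] using h
  -- limit at 1⁻
  have hnum1 : Tendsto (fun p : ℝ => Q (p/2)) (𝓝[<] (1:ℝ)) (𝓝 (Q (1/2))) := by
    have hm : Tendsto (fun p : ℝ => p/2) (𝓝[<] (1:ℝ)) (𝓝 (1/2 : ℝ)) := by
      have : Tendsto (fun p : ℝ => p/2) (𝓝 (1:ℝ)) (𝓝 ((1:ℝ)/2)) :=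
        ((continuous_id.div_const 2).tendsto 1)
      exact this.mono_left nhdsWithin_le_nhds
    exact (hQcont _ hhalf).tendsto.comp hm
  have hden1 : Tendsto (fun p : ℝ => Q ((1+p)/2)) (𝓝[<] (1:ℝ)) atTop := by
    have hm : Tendsto (fun p : ℝ => (1+p)/2) (𝓝[<] (1:ℝ)) (𝓝[<] (1:ℝ)) := by
      apply tendsto_nhdsWithin_of_tendsto_nhds_of_eventually_within
      · have : Tendsto (fun p : ℝ => (1+p)/2) (𝓝 (1:ℝ)) (𝓝 (((1:ℝ)+1)/2)) :=
          (((continuous_const.add continuous_id).div_const 2).tendsto 1)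
        norm_num at this
        exact this.mono_left nhdsWithin_le_nhds
      · filter_upwards [self_mem_nhdsWithin] with p hp
        simp only [Set.mem_Iio] at hp ⊢
        linarith
    exact (quantile_tendsto_atTop hFcont hF0 hF01 hFstrict hFtop).comp hm
  have hT1 : Tendsto f (𝓝[<] (1:ℝ)) (𝓝 1) := by
    have : Tendsto (fun p : ℝ => Q (p/2) / Q ((1+p)/2)) (𝓝[<] (1:ℝ)) (𝓝 0) :=
      hnum1.div_atTop hden1
    have h := (tendsto_const_nhds (x := (1:ℝ)) (f := 𝓝[<] (1:ℝ))).sub this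
    simpa [hf, qZcurve] using h
  -- the extension
  set g : ℝ → ℝ := fun p => if p ∈ Set.Ioo (0:ℝ) 1 then f p else 1 with hg
  have hEq : Set.EqOn g f (Set.Ioo (0:ℝ) 1) := fun p hp => if_pos hp
  have hgCont : ContinuousOn g (Set.Icc (0:ℝ) 1) := by
    intro p hp
    rcases eq_or_lt_of_le hp.1 with h0 | h0
    · -- p = 0
      subst h0
      have hg0 : g 0 = 1 := if_neg (by simp)
      rw [ContinuousWithinAt, hg0]
      have hsplit : Set.Icc (0:ℝ) 1 = {0} ∪ Set.Ioc 0 1 := by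
        ext x
        simp only [Set.mem_Icc, Set.mem_union, Set.mem_singleton_iff, Set.mem_Ioc]
        constructor
        · rintro ⟨h1, h2⟩
          rcases eq_or_lt_of_le h1 with h | h
          · exact Or.inl h.symm
          · exact Or.inr ⟨h, h2⟩
        · rintro (h | ⟨h1, h2⟩)
          · simp [h]
          · exact ⟨h1.le, h2⟩
      rw [hsplit, nhdsWithin_union]
      rw [tendsto_sup]
      constructor
      · rw [nhdsWithin_singleton]
        simpa [hg0] using tendsto_pure_nhds g 0
      · have hle : 𝓝[Set.Ioc (0:ℝ) 1] 0 ≤ 𝓝[>] (0:ℝ) :=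
          nhdsWithin_mono _ Set.Ioc_subset_Ioi_self
        refine (hT0.mono_left hle).congr' ?_
        filter_upwards [self_mem_nhdsWithin,
          eventually_nhdsWithin_of_eventually_nhds (eventually_lt_nhds (by norm_num : (0:ℝ) < 1))]
          with q hq hq1
        exact (hEq ⟨hq.1, hq1⟩).symm
    rcases eq_or_lt_of_le hp.2 with h1 | h1
    · -- p = 1
      have h1' : p = 1 := h1
      subst h1'
      have hg1 : g 1 = 1 := if_neg (by simp)
      rw [ContinuousWithinAt, hg1]
      have hsplit : Set.Icc (0:ℝ) 1 = Set.Ico 0 1 ∪ {1} := by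
        ext x
        simp only [Set.mem_Icc, Set.mem_union, Set.mem_singleton_iff, Set.mem_Ico]
        constructor
        · rintro ⟨ha, hb⟩
          rcases eq_or_lt_of_le hb with h | h
          · exact Or.inr h
          · exact Or.inl ⟨ha, h⟩
        · rintro (⟨ha, hb⟩ | h)
          · exact ⟨ha, hb.le⟩
          · simp [h]
      rw [hsplit, nhdsWithin_union, tendsto_sup]
      constructor
      · have hle : 𝓝[Set.Ico (0:ℝ) 1] 1 ≤ 𝓝[<] (1:ℝ) :=
          nhdsWithin_mono _ Set.Ico_subset_Iio_self
        refine (hT1.mono_left hle).congr' ?_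
        filter_upwards [self_mem_nhdsWithin, eventually_nhdsWithin_of_eventually_nhds
          (eventually_gt_nhds (by norm_num : (0:ℝ) < 1))] with q hq hq0
        exact (hEq ⟨hq0, hq.2⟩).symm
      · rw [nhdsWithin_singleton]
        simpa [hg1] using tendsto_pure_nhds g 1
    · -- interior
      have hpi : p ∈ Set.Ioo (0:ℝ) 1 := ⟨h0, h1⟩
      have : ContinuousAt g p := by
        refine (hfCA p hpi).congr ?_
        filter_upwards [isOpen_Ioo.mem_nhds hpi] with q hq
        exact (if_pos hq).symm
      exact this.continuousWithinAt
  -- uniform continuity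
  have hgUC : UniformContinuousOn g (Set.Icc (0:ℝ) 1) :=
    isCompact_Icc.uniformContinuousOn_of_continuous hgCont
  have hfUC : UniformContinuousOn f (Set.Ioo (0:ℝ) 1) := by
    have hmono : UniformContinuousOn g (Set.Ioo (0:ℝ) 1) := by
      unfold UniformContinuousOn at hgUC ⊢
      refine hgUC.mono_left (inf_le_inf_left _ ?_)
      exact principal_mono.mpr (Set.prod_mono Set.Ioo_subset_Icc_self Set.Ioo_subset_Icc_self)
    unfold UniformContinuousOn at hmono ⊢
    refine hmono.congr' ?_
    rw [EventuallyEq]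
    filter_upwards [mem_inf_of_right (mem_principal_self _)] with x hx
    obtain ⟨h1, h2⟩ := hx
    rw [hEq h1, hEq h2]
  exact ⟨hfUC, hfCont, hT0, hT1, g, hgCont, hEq⟩
end
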